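/- Every locally finite metric space (with at least one point) is stable: for any two bounded sequences (xₙ), (yₘ) in X and any two nonprincipal ultrafilters 𝒰, 𝒱 on ℕ, lim_{n,𝒰} lim_{m,𝒱} d(xₙ,yₘ) = lim_{m,𝒱} lim_{n,𝒰} d(xₙ,yₘ). -/

import Mathlib

/-!
A bounded sequence in a locally finite space lies in a single closed ball, hence takes only
finitely many values, so along any ultrafilter it is eventually constant. If `xₙ = a` for
`𝒰`-almost all `n` and `yₘ = b` for `𝒱`-almost all `m`, both iterated limits are just
`d(a, b)`.
-/

open Filter Set

theorem Set.Finite.range_of_forall_dist_le {X : Type*} [PseudoMetricSpace X]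
    (hlf : ∀ (x : X) (r : ℝ), (Metric.closedBall x r).Finite) {x : ℕ → X} {C : ℝ}
    (hC : ∀ n m, dist (x n) (x m) ≤ C) : (range x).Finite :=
  (hlf (x 0) C).subset <| range_subset_iff.2 fun n => hC n 0

theorem Ultrafilter.exists_eventually_eq_of_finite_range {α β : Type*} (f : Ultrafilter α)
    {x : α → β} (hx : (range x).Finite) : ∃ a, ∀ᶠ n in (f : Filter α), x n = a := by
  obtain ⟨a, -, ha⟩ := Ultrafilter.eq_pure_of_finite_mem hx
    (show range x ∈ f.map x from range_mem_map)
  exact ⟨a, show {a} ∈ f.map x from ha ▸ Filter.mem_pure.2 rfl⟩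

theorem Filter.limUnder_eq_of_eventually_eq {α X : Type*} [TopologicalSpace X] [T2Space X]
    [Nonempty X] {f : Filter α} [NeBot f] {g : α → X} {c : X} (h : ∀ᶠ n in f, g n = c) :
    limUnder f g = c :=
  (tendsto_const_nhds.congr' (h.mono fun _ => Eq.symm)).limUnder_eq

theorem Filter.limUnder_limUnder_of_eventually_eq {α β γ δ Z : Type*} [TopologicalSpace Z]
    [T2Space Z] [Nonempty Z] {f : Filter α} {g : Filter β} [NeBot f] [NeBot g]
    (F : γ → δ → Z) {x : α → γ} {y : β → δ} {a : γ} {b : δ}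
    (ha : ∀ᶠ n in f, x n = a) (hb : ∀ᶠ m in g, y m = b) :
    limUnder f (fun n => limUnder g fun m => F (x n) (y m)) = F a b := by
  have hinner : ∀ n, limUnder g (fun m => F (x n) (y m)) = F (x n) b := fun n =>
    limUnder_eq_of_eventually_eq (hb.mono fun m hm => congrArg (F (x n)) hm)
  simp only [hinner]
  exact limUnder_eq_of_eventually_eq (ha.mono fun n hn => congrArg (F · b) hn)

theorem stable_of_locallyFinite {X : Type*} [MetricSpace X]
    (hlf : ∀ (x : X) (r : ℝ), (Metric.closedBall x r).Finite)
    (x y : ℕ → X)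
    (hx : ∃ C : ℝ, ∀ n m : ℕ, dist (x n) (x m) ≤ C)
    (hy : ∃ C : ℝ, ∀ n m : ℕ, dist (y n) (y m) ≤ C)
    (𝒰 𝒱 : Ultrafilter ℕ) :
    Filter.limUnder (𝒰 : Filter ℕ)
        (fun n => Filter.limUnder (𝒱 : Filter ℕ) (fun m => dist (x n) (y m)))
      = Filter.limUnder (𝒱 : Filter ℕ)
        (fun m => Filter.limUnder (𝒰 : Filter ℕ) (fun n => dist (x n) (y m))) := by
  obtain ⟨C, hC⟩ := hx
  obtain ⟨D, hD⟩ := hy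
  obtain ⟨a, ha⟩ := 𝒰.exists_eventually_eq_of_finite_range (.range_of_forall_dist_le hlf hC)
  obtain ⟨b, hb⟩ := 𝒱.exists_eventually_eq_of_finite_range (.range_of_forall_dist_le hlf hD)
  exact (limUnder_limUnder_of_eventually_eq dist ha hb).trans
    (limUnder_limUnder_of_eventually_eq (fun q p => dist p q) hb ha).symm
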